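/- arXiv:cs/0505071 — 3 statements merged into one kernel-verified Lean document; each statement's English description precedes it below -/
import Mathlib

section
/- Let a, b, a', b' be reals with 0 < b ≤ a ≤ 1, 0 < b' ≤ a', and (1−ε)b ≤ b' ≤ b/(1−ε), (1−ε)a ≤ a' ≤ a/(1−ε) for ε ∈ [0,1). If b'/a' ≤ 1, then |b'/a' − b/a| ≤ 1 − (1−ε)². -/
/-- Absolute-error bound for association rule accuracy under relative-error
frequency discretization: if `0 < b ≤ a ≤ 1`, `0 < b' ≤ a'`, the discretized
values have multiplicative error in `[1−ε, 1/(1−ε)]`, and the estimated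
accuracy satisfies `b'/a' ≤ 1`, then `|b'/a' − b/a| ≤ 1 − (1−ε)²`. -/
theorem accuracy_abs_error (a b a' b' ε : ℝ)
    (hb : 0 < b) (hba : b ≤ a) (ha1 : a ≤ 1)
    (hb' : 0 < b') (hba' : b' ≤ a')
    (hε : 0 ≤ ε) (hε1 : ε < 1)
    (hbl : (1 - ε) * b ≤ b') (hbu : b' ≤ b / (1 - ε))
    (hal : (1 - ε) * a ≤ a') (hau : a' ≤ a / (1 - ε))
    (hacc : b' / a' ≤ 1) :
    |b' / a' - b / a| ≤ 1 - (1 - ε) ^ 2 := by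
  have hεp : (0:ℝ) < 1 - ε := by linarith
  have ha : 0 < a := lt_of_lt_of_le hb hba
  have ha' : 0 < a' := lt_of_lt_of_le hb' hba'
  have hbu' : b' * (1 - ε) ≤ b := by
    have := (le_div_iff₀ hεp).mp hbu; linarith
  have hau' : a' * (1 - ε) ≤ a := by
    have := (le_div_iff₀ hεp).mp hau; linarith
  have h1 : (1 - ε) ^ 2 * (b / a) ≤ b' / a' := by
    rw [← mul_div_assoc, div_le_div_iff₀ ha ha']
    nlinarith [mul_le_mul hbl hau' (by positivity) (le_of_lt hb')]
  have h2 : (b' / a') * (1 - ε) ^ 2 ≤ b / a := by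
    rw [div_mul_eq_mul_div, div_le_div_iff₀ ha' ha]
    nlinarith [mul_le_mul hbu' hal (by nlinarith) (le_of_lt hb)]
  have hr1 : b / a ≤ 1 := by rw [div_le_one ha]; linarith
  have ht : 0 ≤ 1 - (1 - ε) ^ 2 := by nlinarith
  rw [abs_sub_le_iff]
  constructor
  · nlinarith [h2, mul_nonneg ht (sub_nonneg.mpr hacc)]
  · nlinarith [h1, mul_nonneg ht (sub_nonneg.mpr hr1)]
end

section
/- The collection of closed patterns is the unique smallest subcollection S of a finite pattern collection P such that the max-estimation is exact: for an anti-monotone interestingness measure φ, φ(p) = max{φ(p') : p ⪯ p', p' ∈ S} holds for all p ∈ P if and only if S contains all closed patterns of P, and it holds when S equals the set of closed patterns. -/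
/-!
On a finite poset every pattern `p` lies below a maximal element `q` of `{q | p ≤ q ∧ φ q = φ p}`,
and such a `q` is closed; by anti-monotonicity `φ q` is then the maximum of `φ` above `p`, so any
`S` containing the closed patterns estimates exactly. Conversely, for a closed `p` the only pattern
above `p` with the same value is `p` itself, so an exact estimate at `p` forces `p ∈ S`.
-/

section ClosedPatterns

variable {P α : Type*} [PartialOrder P] [PartialOrder α]

def IsClosedPattern (φ : P → α) (p : P) : Prop :=
  ∀ p', p < p' → φ p' < φ p

/-- Exactness at `p` of the max-estimate `max {φ q | p ≤ q ∈ S}`. -/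
def MaxEstimateExact (φ : P → α) (S : Set P) (p : P) : Prop :=
  ∃ q ∈ S, p ≤ q ∧ φ q = φ p ∧ ∀ q' ∈ S, p ≤ q' → φ q' ≤ φ p

theorem exists_isClosedPattern_le_eq [Finite P] {φ : P → α} (hφ : Antitone φ) (p : P) :
    ∃ q, IsClosedPattern φ q ∧ p ≤ q ∧ φ q = φ p := by
  obtain ⟨q, ⟨hpq, hφq⟩, hmax⟩ :=
    (Set.toFinite {q : P | p ≤ q ∧ φ q = φ p}).exists_maximalFor id _ ⟨p, le_rfl, rfl⟩
  refine ⟨q, fun p' hqp' => (hφ hqp'.le).lt_of_ne fun hφp' => hqp'.ne ?_, hpq, hφq⟩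
  exact le_antisymm hqp'.le (hmax ⟨hpq.trans hqp'.le, hφp'.trans hφq⟩ hqp'.le)

theorem IsClosedPattern.mem_of_maxEstimateExact {φ : P → α} {S : Set P} {p : P}
    (hp : IsClosedPattern φ p) (hS : MaxEstimateExact φ S p) : p ∈ S := by
  obtain ⟨q, hqS, hpq, hφq, -⟩ := hS
  obtain rfl | hlt := hpq.eq_or_lt
  · exact hqS
  · exact absurd hφq (hp q hlt).ne

theorem maxEstimateExact_of_closed_subset [Finite P] {φ : P → α} (hφ : Antitone φ) {S : Set P}
    (hS : {p | IsClosedPattern φ p} ⊆ S) (p : P) : MaxEstimateExact φ S p := by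
  obtain ⟨q, hq, hpq, hφq⟩ := exists_isClosedPattern_le_eq hφ p
  exact ⟨q, hS hq, hpq, hφq, fun _ _ hpq' => hφ hpq'⟩

theorem maxEstimateExact_iff_closed_subset [Finite P] {φ : P → α} (hφ : Antitone φ)
    (S : Set P) : (∀ p, MaxEstimateExact φ S p) ↔ {p | IsClosedPattern φ p} ⊆ S :=
  ⟨fun hS _ hp => hp.mem_of_maxEstimateExact (hS _), maxEstimateExact_of_closed_subset hφ⟩

end ClosedPatterns

theorem closed_patterns_smallest_exact_general
    {P : Type*} [Fintype P] [PartialOrder P] (φ : P → ℝ)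
    (hanti : ∀ p p' : P, p ≤ p' → φ p' ≤ φ p)
    (S : Set P) :
    ((∀ p : P, ∃ q ∈ S, p ≤ q ∧ φ q = φ p ∧ ∀ q' ∈ S, p ≤ q' → φ q' ≤ φ p) ↔
      {p : P | ∀ p', p < p' → φ p' < φ p} ⊆ S) ∧
    (∀ p : P, ∃ q ∈ {p : P | ∀ p', p < p' → φ p' < φ p},
      p ≤ q ∧ φ q = φ p ∧
        ∀ q' ∈ {p : P | ∀ p', p < p' → φ p' < φ p}, p ≤ q' → φ q' ≤ φ p) :=
  have hφ : Antitone φ := fun p p' => hanti p p'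
  ⟨maxEstimateExact_iff_closed_subset hφ S, maxEstimateExact_of_closed_subset hφ subset_rfl⟩

/-- The collection of closed patterns is the unique smallest subcollection `S`
of a finite pattern collection for which the max-estimation of an
anti-monotone interestingness measure `φ` is exact: the estimation from `S`
is exact for all patterns iff `S` contains all closed patterns, and it is
exact when `S` is exactly the set of closed patterns. -/
theorem closed_patterns_smallest_exact
    {P : Type*} [Fintype P] [PartialOrder P] (φ : P → ℝ)
    (hrange : ∀ p, φ p ∈ Set.Icc (0:ℝ) 1)
    (hanti : ∀ p p' : P, p ≤ p' → φ p' ≤ φ p)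
    (S : Set P) :
    ((∀ p : P, ∃ q ∈ S, p ≤ q ∧ φ q = φ p ∧ ∀ q' ∈ S, p ≤ q' → φ q' ≤ φ p) ↔
      {p : P | ∀ p', p < p' → φ p' < φ p} ⊆ S) ∧
    (∀ p : P, ∃ q ∈ {p : P | ∀ p', p < p' → φ p' < φ p},
      p ≤ q ∧ φ q = φ p ∧
        ∀ q' ∈ {p : P | ∀ p', p < p' → φ p' < φ p}, p ≤ q' → φ q' ≤ φ p) :=
  closed_patterns_smallest_exact_general φ hanti S
end

section
/- The number of antichains in a minimum antichain partition of a finite poset equals the cardinality of a maximum chain (Mirsky's theorem): a finite poset P can be partitioned into m antichains if and only if every chain in P has at most m elements. -/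
section MirskyAux

variable {P : Type*} [Fintype P] [PartialOrder P]

open Finset

attribute [local instance] Classical.propDecidable

/-- The height of an element: longest chain strictly below it. -/
noncomputable def mht [Fintype P] [PartialOrder P] (p : P) : ℕ :=
  ((Finset.univ.filter (· < p)).attach).sup (fun q => mht q.1 + 1)
termination_by (Finset.univ.filter (· < p)).card
decreasing_by
  have hq : q.1 < p := (Finset.mem_filter.mp q.2).2
  apply Finset.card_lt_card
  constructor
  · intro x hx
    simp only [Finset.mem_filter, Finset.mem_univ, true_and] at *
    exact hx.trans hq
  · intro h
    have := h (Finset.mem_filter.mpr ⟨Finset.mem_univ q.1, hq⟩)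
    simp only [Finset.mem_filter] at this
    exact lt_irrefl _ this.2

lemma mht_lt_mht {p q : P} (h : p < q) : mht p < mht q := by
  rw [show mht q = ((Finset.univ.filter (· < q)).attach).sup (fun r => mht r.1 + 1)
    from by rw [mht]]
  have hp : p ∈ Finset.univ.filter (· < q) :=
    Finset.mem_filter.mpr ⟨Finset.mem_univ p, h⟩
  calc mht p < mht p + 1 := Nat.lt_succ_self _
    _ ≤ _ := Finset.le_sup (f := fun r => mht r.1 + 1) (Finset.mem_attach _ ⟨p, hp⟩)

/-- There is a chain of cardinality `mht p + 1` with top element `p`. -/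
lemma mht_chain (p : P) : ∃ c : Finset P, IsChain (· ≤ ·) (c : Set P) ∧
    p ∈ c ∧ c.card = mht p + 1 ∧ ∀ x ∈ c, x ≤ p := by
  induction p using WellFoundedLT.induction with
  | ind p ih =>
    by_cases hE : (Finset.univ.filter (· < p)).attach = ∅
    · refine ⟨{p}, ?_, Finset.mem_singleton_self p, ?_, ?_⟩
      · simp [Set.Subsingleton.isChain]
      · rw [Finset.card_singleton, show mht p = _ from by rw [mht], hE]
        simp
      · simp
    · have hne : ((Finset.univ.filter (· < p)).attach).Nonempty :=
        Finset.nonempty_iff_ne_empty.mpr hE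
      obtain ⟨q, hq, hqs⟩ := Finset.exists_mem_eq_sup _ hne (fun r => mht r.1 + 1)
      have hqlt : q.1 < p := (Finset.mem_filter.mp q.2).2
      obtain ⟨c, hc, hqc, hcard, hle⟩ := ih q.1 hqlt
      have hpc : p ∉ c := fun h => absurd (hle p h) (not_le_of_gt hqlt)
      refine ⟨insert p c, ?_, Finset.mem_insert_self p c, ?_, ?_⟩
      · rw [Finset.coe_insert]
        exact hc.insert (fun x hx _ => Or.inr ((hle x hx).trans hqlt.le))
      · rw [Finset.card_insert_of_notMem hpc, hcard,
          show mht p = _ from by rw [mht], ← hqs]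
      · intro x hx
        rcases Finset.mem_insert.mp hx with rfl | hx
        · exact le_refl x
        · exact (hle x hx).trans hqlt.le

lemma mht_bound (m : ℕ)
    (h : ∀ c : Finset P, IsChain (· ≤ ·) (c : Set P) → c.card ≤ m) (p : P) :
    mht p < m := by
  obtain ⟨c, hc, _, hcard, _⟩ := mht_chain p
  have := h c hc
  omega

end MirskyAux

/-- Mirsky's theorem: a finite poset can be partitioned into `m` antichains
(given by the fibers of a coloring `f : P → Fin m`) iff every chain has at
most `m` elements; hence the minimum number of antichains in an antichain
partition equals the maximum cardinality of a chain. -/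
theorem mirsky {P : Type*} [Fintype P] [PartialOrder P] :
    (∀ m : ℕ,
      (∃ f : P → Fin m, ∀ p q : P, f p = f q → p ≤ q → p = q) ↔
        ∀ c : Finset P, IsChain (· ≤ ·) (c : Set P) → c.card ≤ m) ∧
    IsLeast {m : ℕ | ∃ f : P → Fin m, ∀ p q : P, f p = f q → p ≤ q → p = q}
      (sSup {n : ℕ | ∃ c : Finset P, IsChain (· ≤ ·) (c : Set P) ∧ c.card = n}) := by
  have key : ∀ m : ℕ,
      (∃ f : P → Fin m, ∀ p q : P, f p = f q → p ≤ q → p = q) ↔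
        ∀ c : Finset P, IsChain (· ≤ ·) (c : Set P) → c.card ≤ m := by
    intro m
    constructor
    · rintro ⟨f, hf⟩ c hc
      have : Set.InjOn f (c : Set P) := by
        intro p hp q hq hpq
        rcases hc.total hp hq with h | h
        · exact hf p q hpq h
        · exact (hf q p hpq.symm h).symm
      calc c.card = (c.image f).card := (Finset.card_image_of_injOn this).symm
        _ ≤ Fintype.card (Fin m) := Finset.card_le_univ _
        _ = m := Fintype.card_fin m
    · intro h
      exact ⟨fun p => ⟨mht p, mht_bound m h p⟩, fun p q hfq hpq => by
        rcases lt_or_eq_of_le hpq with hlt | rfl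
        · exact absurd (Fin.mk.injEq _ _ _ _ ▸ hfq) (ne_of_lt (mht_lt_mht hlt))
        · rfl⟩
  refine ⟨key, ?_, ?_⟩
  · -- sSup is in the set
    have hbdd : BddAbove {n : ℕ | ∃ c : Finset P, IsChain (· ≤ ·) (c : Set P) ∧ c.card = n} := by
      refine ⟨Fintype.card P, fun n ⟨c, _, hcn⟩ => ?_⟩
      rw [← hcn]; exact Finset.card_le_univ c
    rw [Set.mem_setOf_eq, key]
    intro c hc
    exact le_csSup hbdd ⟨c, hc, rfl⟩
  · -- lower bound
    intro m hm
    rw [Set.mem_setOf_eq, key] at hm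
    have hne : ({n : ℕ | ∃ c : Finset P, IsChain (· ≤ ·) (c : Set P) ∧ c.card = n}).Nonempty :=
      ⟨0, ∅, by simp [IsChain, Set.Pairwise], Finset.card_empty⟩
    apply csSup_le hne
    rintro n ⟨c, hc, rfl⟩
    exact hm c hc
end
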